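/- arXiv:1909.00367 — 5 statements merged into one kernel-verified Lean document; each statement's English description precedes it below -/
import Mathlib

section
/- Fix n ≥ 1, σ > 0, a > 0, and 0 < ε < √n·σ. Let f_ε : ℝ^n → ℝ be the spherical Gaussian mixture with 2n components, common variance σ^2 and common amplitude a, whose mean vectors are ±(√n·σ − ε)·e_i for i = 1, …, n, i.e. f_ε(x) = a · Σ_{i=1}^{n} [ exp(−|x − (√n σ − ε)e_i|^2/(2σ^2)) + exp(−|x + (√n σ − ε)e_i|^2/(2σ^2)) ]. Then the Hessian of f_ε at the origin equals 2a · exp(−(√n σ − ε)^2/(2σ^2)) · σ^{−2} · [σ^{−2}(√n σ − ε)^2 − n] · I_n, which is a negative definite matrix. -/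
/-!
A Gaussian bump `g_w x = exp (-‖x - w‖² / (2s))` has second derivative
`s⁻¹ g_w x (s⁻¹ ⟪x - w, u⟫ ⟪x - w, v⟫ - ⟪u, v⟫)`. At the origin the `2n` components with means
`±c bₖ`, `(bₖ)` orthonormal, all take the value `exp (-c² / (2s))`, and by Parseval
`∑ₖ ⟪bₖ, u⟫ ⟪bₖ, v⟫ = ⟪u, v⟫`; so the Hessian of the mixture at `0` is the scalar
`2a exp (-c² / (2s)) s⁻¹ (s⁻¹ c² - n)` times the identity. For `c = √n σ - ε` with
`0 < ε < √n σ` we have `c² < n σ²`, so this scalar is negative.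
-/

open Matrix Real RealInnerProductSpace

section Gaussian

variable {E : Type*} [NormedAddCommGroup E] [InnerProductSpace ℝ E]

noncomputable def sphericalGaussian (s : ℝ) (w x : E) : ℝ := exp (-‖x - w‖ ^ 2 / (2 * s))

theorem hasFDerivAt_sphericalGaussian (s : ℝ) (w z : E) :
    HasFDerivAt (sphericalGaussian s w)
      (-(s⁻¹ * sphericalGaussian s w z) • innerSL ℝ (z - w)) z := by
  have hsq := (((hasFDerivAt_id z).sub_const w).norm_sq.mul_const (-(2 * s)⁻¹)).exp
  convert hsq using 1
  · ext x
    simp only [sphericalGaussian, id]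
    ring_nf
  · ext u
    simp only [sphericalGaussian, map_sub, neg_smul, _root_.neg_apply, _root_.smul_apply,
      _root_.sub_apply, coe_innerSL_apply, smul_eq_mul, id_eq, _root_.mul_inv_rev, mul_neg,
      ContinuousLinearMap.comp_id, smul_neg, nsmul_eq_mul, Nat.cast_ofNat, neg_inj]
    ring_nf

@[fun_prop]
theorem differentiable_sphericalGaussian (s : ℝ) (w : E) :
    Differentiable ℝ (sphericalGaussian s w) :=
  fun z => (hasFDerivAt_sphericalGaussian s w z).differentiableAt

theorem fderiv_sphericalGaussian_apply (s : ℝ) (w z v : E) :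
    fderiv ℝ (sphericalGaussian s w) z v = -(s⁻¹ * sphericalGaussian s w z * ⟪z - w, v⟫) := by
  simp [(hasFDerivAt_sphericalGaussian s w z).fderiv, inner_sub_left, mul_assoc]

theorem fderiv_fderiv_sphericalGaussian_apply (s : ℝ) (w x u v : E) :
    fderiv ℝ (fun z => fderiv ℝ (sphericalGaussian s w) z v) x u =
      s⁻¹ * sphericalGaussian s w x * (s⁻¹ * ⟪x - w, u⟫ * ⟪x - w, v⟫ - ⟪u, v⟫) := by
  have hinner : HasFDerivAt (fun z => ⟪z - w, v⟫) (innerSL ℝ v) x := by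
    have hfun : (fun z => ⟪z - w, v⟫) = fun z => innerSL ℝ v z - ⟪v, w⟫ := by
      ext z
      simp [inner_sub_left, real_inner_comm]
    rw [hfun]
    exact (innerSL ℝ v).hasFDerivAt.sub_const _
  have h := (((hasFDerivAt_sphericalGaussian s w x).const_mul s⁻¹).fun_mul hinner).fun_neg
  simp_rw [fderiv_sphericalGaussian_apply]
  rw [h.fderiv]
  simp only [_root_.neg_apply, _root_.add_apply, _root_.smul_apply, innerSL_apply_apply, smul_eq_mul, real_inner_comm v u]
  ring

@[fun_prop]
theorem differentiable_fderiv_sphericalGaussian_apply (s : ℝ) (w v : E) :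
    Differentiable ℝ (fun z => fderiv ℝ (sphericalGaussian s w) z v) := by
  simp_rw [fderiv_sphericalGaussian_apply]
  exact (((differentiable_sphericalGaussian s w).const_mul _).mul
    ((differentiable_id.sub_const w).inner ℝ (differentiable_const v))).neg

end Gaussian

section Mixture

variable {E ι : Type*} [NormedAddCommGroup E] [InnerProductSpace ℝ E] [Fintype ι]

theorem fderiv_fderiv_symmetricMixture_zero_apply (b : OrthonormalBasis ι ℝ E) (a c s : ℝ)
    (u v : E) :
    fderiv ℝ (fun z => fderiv ℝ (fun x => a * ∑ k,
        (sphericalGaussian s (c • b k) x + sphericalGaussian s (-(c • b k)) x)) z v) 0 u =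
      2 * a * exp (-c ^ 2 / (2 * s)) * s⁻¹ * (s⁻¹ * c ^ 2 - Fintype.card ι) * ⟪u, v⟫ := by
  simp (disch := fun_prop) only [fderiv_const_mul, fderiv_fun_sum, fderiv_fun_add,
    _root_.smul_apply, _root_.sum_apply, _root_.add_apply, smul_eq_mul,
    fderiv_fderiv_sphericalGaussian_apply, zero_sub, inner_neg_left, mul_neg, neg_mul, neg_neg,
    sub_neg_eq_add, zero_add]
  have hnorm : ∀ k, ‖c • b k‖ ^ 2 = c ^ 2 := fun k => by simp [norm_smul, b.norm_eq_one]
  have hterm : ∀ k,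
      s⁻¹ * sphericalGaussian s (c • b k) 0 * (s⁻¹ * ⟪c • b k, u⟫ * ⟪c • b k, v⟫ - ⟪u, v⟫) +
        s⁻¹ * sphericalGaussian s (-(c • b k)) 0 * (s⁻¹ * ⟪c • b k, u⟫ * ⟪c • b k, v⟫ - ⟪u, v⟫) =
      2 * s⁻¹ * exp (-c ^ 2 / (2 * s)) * (s⁻¹ * c ^ 2 * (⟪u, b k⟫ * ⟪b k, v⟫) - ⟪u, v⟫) := by
    intro k
    simp only [sphericalGaussian, zero_sub, norm_neg, neg_neg, hnorm, real_inner_smul_left,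
      real_inner_comm (b k) u]
    ring
  rw [Finset.sum_congr rfl fun k _ => hterm k, ← Finset.mul_sum, Finset.sum_sub_distrib,
    ← Finset.mul_sum, b.sum_inner_mul_inner, Finset.sum_const, Finset.card_univ, nsmul_eq_mul]
  ring

end Mixture

theorem inv_sq_mul_sq_sqrt_mul_sub_lt {x σ ε : ℝ} (hx : 0 ≤ x) (hσ : σ ≠ 0) (hε : 0 < ε)
    (hεlt : ε < √x * σ) : (σ ^ 2)⁻¹ * (√x * σ - ε) ^ 2 < x := by
  have hsq : (√x * σ - ε) ^ 2 < σ ^ 2 * x :=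
    calc (√x * σ - ε) ^ 2 < (√x * σ) ^ 2 := by gcongr; linarith
      _ = σ ^ 2 * x := by rw [mul_pow, sq_sqrt hx, mul_comm]
  rwa [inv_mul_lt_iff₀ (by positivity)]

theorem dotProduct_smul_one_mulVec_neg {m : Type*} [Fintype m] [DecidableEq m] {r : ℝ}
    (hr : r < 0) {y : m → ℝ} (hy : y ≠ 0) : y ⬝ᵥ (r • (1 : Matrix m m ℝ)) *ᵥ y < 0 := by
  rw [smul_mulVec, one_mulVec, dotProduct_smul, smul_eq_mul]
  exact mul_neg_of_neg_of_pos hr (by simpa using dotProduct_self_star_pos_iff.mpr hy)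

theorem symmetric_gmm_hessian_negdef_general (n : ℕ) (σ a ε : ℝ)
    (hσ : 0 < σ) (ha : 0 < a) (hε : 0 < ε) (hεlt : ε < Real.sqrt n * σ)
    (f : EuclideanSpace ℝ (Fin n) → ℝ)
    (hf : ∀ x, f x = a * ∑ i : Fin n,
      (Real.exp (-‖x - (Real.sqrt n * σ - ε) • EuclideanSpace.single i 1‖ ^ 2 /
          (2 * σ ^ 2)) +
        Real.exp (-‖x + (Real.sqrt n * σ - ε) • EuclideanSpace.single i 1‖ ^ 2 /
          (2 * σ ^ 2)))) :
    (Matrix.of fun i j : Fin n =>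
        fderiv ℝ (fun z => fderiv ℝ f z (EuclideanSpace.single j 1)) 0
          (EuclideanSpace.single i 1))
      = (2 * a * Real.exp (-(Real.sqrt n * σ - ε) ^ 2 / (2 * σ ^ 2)) * (σ ^ 2)⁻¹ *
          ((σ ^ 2)⁻¹ * (Real.sqrt n * σ - ε) ^ 2 - n)) • (1 : Matrix (Fin n) (Fin n) ℝ) ∧
    (∀ y : Fin n → ℝ, y ≠ 0 →
      y ⬝ᵥ ((2 * a * Real.exp (-(Real.sqrt n * σ - ε) ^ 2 / (2 * σ ^ 2)) * (σ ^ 2)⁻¹ *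
          ((σ ^ 2)⁻¹ * (Real.sqrt n * σ - ε) ^ 2 - n)) •
            (1 : Matrix (Fin n) (Fin n) ℝ)).mulVec y < 0) := by
  set c := √n * σ - ε
  set e := EuclideanSpace.basisFun (Fin n) ℝ
  have hmixture : f = fun x => a * ∑ k,
      (sphericalGaussian (σ ^ 2) (c • e k) x + sphericalGaussian (σ ^ 2) (-(c • e k)) x) := by
    ext x
    simp [hf, sphericalGaussian, e]
  have hcoef : 2 * a * exp (-c ^ 2 / (2 * σ ^ 2)) * (σ ^ 2)⁻¹ * ((σ ^ 2)⁻¹ * c ^ 2 - n) < 0 :=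
    mul_neg_of_pos_of_neg (by positivity) <| sub_neg.mpr <|
      inv_sq_mul_sq_sqrt_mul_sub_lt n.cast_nonneg hσ.ne' hε hεlt
  refine ⟨?_, fun y hy => dotProduct_smul_one_mulVec_neg hcoef hy⟩
  ext i j
  rw [of_apply, hmixture, fderiv_fderiv_symmetricMixture_zero_apply, Matrix.smul_apply,
    Matrix.one_apply]
  simp [EuclideanSpace.inner_single_left]

/-- For `n ≥ 1`, `σ > 0`, `a > 0` and `0 < ε < √n σ`, the Hessian at the origin of the
spherical Gaussian mixture with `2n` components, common variance `σ²`, common amplitude `a`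
and means `±(√n σ - ε) eᵢ` equals
`2a exp(-(√n σ - ε)²/(2σ²)) σ⁻² [σ⁻²(√n σ - ε)² - n] • Iₙ`, a negative definite matrix. -/
theorem symmetric_gmm_hessian_negdef (n : ℕ) (hn : 1 ≤ n) (σ a ε : ℝ)
    (hσ : 0 < σ) (ha : 0 < a) (hε : 0 < ε) (hεlt : ε < Real.sqrt n * σ)
    (f : EuclideanSpace ℝ (Fin n) → ℝ)
    (hf : ∀ x, f x = a * ∑ i : Fin n,
      (Real.exp (-‖x - (Real.sqrt n * σ - ε) • EuclideanSpace.single i 1‖ ^ 2 /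
          (2 * σ ^ 2)) +
        Real.exp (-‖x + (Real.sqrt n * σ - ε) • EuclideanSpace.single i 1‖ ^ 2 /
          (2 * σ ^ 2)))) :
    (Matrix.of fun i j : Fin n =>
        fderiv ℝ (fun z => fderiv ℝ f z (EuclideanSpace.single j 1)) 0
          (EuclideanSpace.single i 1))
      = (2 * a * Real.exp (-(Real.sqrt n * σ - ε) ^ 2 / (2 * σ ^ 2)) * (σ ^ 2)⁻¹ *
          ((σ ^ 2)⁻¹ * (Real.sqrt n * σ - ε) ^ 2 - n)) • (1 : Matrix (Fin n) (Fin n) ℝ) ∧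
    (∀ y : Fin n → ℝ, y ≠ 0 →
      y ⬝ᵥ ((2 * a * Real.exp (-(Real.sqrt n * σ - ε) ^ 2 / (2 * σ ^ 2)) * (σ ^ 2)⁻¹ *
          ((σ ^ 2)⁻¹ * (Real.sqrt n * σ - ε) ^ 2 - n)) •
            (1 : Matrix (Fin n) (Fin n) ℝ)).mulVec y < 0) :=
  symmetric_gmm_hessian_negdef_general n σ a ε hσ ha hε hεlt f hf
end

section
/- Fix n ≥ 1, σ > 0, a > 0, and 0 < ε < √n·σ. Let f_ε : ℝ^n → ℝ be the spherical Gaussian mixture with 2n components, common variance σ^2 and common amplitude a, whose mean vectors are ±(√n·σ − ε)·e_i for i = 1, …, n. Then f_ε has a (strict) local maximum at the origin, and the Euclidean distance from the origin to each of the 2n mean vectors equals √n·σ − ε. -/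
/-!
Pairing the components at `±r eᵢ` gives
`f x = 2a e^{-r²/2σ²} · e^{-‖x‖²/2σ²} ∑ᵢ cosh (r xᵢ / σ²)`.
From `cosh t ≤ e^{t²/2}` and `e^y ≤ 1 + y e^y`, the cosh sum is at most
`n + (r²/2σ⁴) ‖x‖² e^{r²‖x‖²/2σ⁴}`, while `n e^{‖x‖²/2σ²} ≥ n + (n/2σ²) ‖x‖²`.
Since `r² < nσ²`, the first bound is the smaller one for small `x ≠ 0`.
-/

open Real Filter Topology RealInnerProductSpace

namespace Real

theorem exp_le_one_add_mul_exp (y : ℝ) : exp y ≤ 1 + y * exp y := by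
  have h := mul_le_mul_of_nonneg_right (one_sub_le_exp_neg y) (exp_pos y).le
  rw [← exp_add, neg_add_cancel, exp_zero] at h
  linarith

theorem cosh_le_one_add_mul_exp (t : ℝ) : cosh t ≤ 1 + t ^ 2 / 2 * exp (t ^ 2 / 2) :=
  (cosh_le_exp_half_sq t).trans (exp_le_one_add_mul_exp _)

end Real

theorem exp_neg_norm_sub_sq_div_add_exp_neg_norm_add_sq_div {E : Type*}
    [NormedAddCommGroup E] [InnerProductSpace ℝ E] (s : ℝ) (x v : E) :
    exp (-‖x - v‖ ^ 2 / s) + exp (-‖x + v‖ ^ 2 / s) =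
      2 * exp (-‖v‖ ^ 2 / s) * (exp (-‖x‖ ^ 2 / s) * cosh (2 * ⟪x, v⟫ / s)) := by
  rw [norm_sub_sq_real, norm_add_sq_real, cosh_eq,
    show -(‖x‖ ^ 2 - 2 * ⟪x, v⟫ + ‖v‖ ^ 2) / s = -‖v‖ ^ 2 / s + -‖x‖ ^ 2 / s + 2 * ⟪x, v⟫ / s by
      ring,
    show -(‖x‖ ^ 2 + 2 * ⟪x, v⟫ + ‖v‖ ^ 2) / s = -‖v‖ ^ 2 / s + -‖x‖ ^ 2 / s + -(2 * ⟪x, v⟫ / s) by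
      ring]
  simp only [exp_add]
  ring

namespace EuclideanSpace

variable {ι : Type*} [Fintype ι]

theorem sum_cosh_mul_apply_le (c : ℝ) (x : EuclideanSpace ℝ ι) :
    ∑ i, cosh (c * x i) ≤
      Fintype.card ι + c ^ 2 / 2 * ‖x‖ ^ 2 * exp (c ^ 2 / 2 * ‖x‖ ^ 2) := by
  have hterm (i : ι) : cosh (c * x i) ≤ 1 + c ^ 2 / 2 * x i ^ 2 * exp (c ^ 2 / 2 * ‖x‖ ^ 2) := by
    have hxi : x i ^ 2 ≤ ‖x‖ ^ 2 := by
      simpa only [Real.norm_eq_abs, sq_abs] using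
        pow_le_pow_left₀ (norm_nonneg _) (PiLp.norm_apply_le x i) 2
    calc cosh (c * x i) ≤ 1 + (c * x i) ^ 2 / 2 * exp ((c * x i) ^ 2 / 2) :=
          cosh_le_one_add_mul_exp _
      _ ≤ 1 + c ^ 2 / 2 * x i ^ 2 * exp (c ^ 2 / 2 * ‖x‖ ^ 2) := by
          rw [show (c * x i) ^ 2 / 2 = c ^ 2 / 2 * x i ^ 2 by ring]
          gcongr
  calc ∑ i, cosh (c * x i)
      ≤ ∑ i, (1 + c ^ 2 / 2 * x i ^ 2 * exp (c ^ 2 / 2 * ‖x‖ ^ 2)) :=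
        Finset.sum_le_sum fun i _ => hterm i
    _ = Fintype.card ι + c ^ 2 / 2 * ‖x‖ ^ 2 * exp (c ^ 2 / 2 * ‖x‖ ^ 2) := by
      rw [Finset.sum_add_distrib, ← Finset.sum_mul, ← Finset.mul_sum, ← real_norm_sq_eq]
      simp only [Finset.sum_const, Finset.card_univ, nsmul_eq_mul, mul_one]

theorem eventually_exp_neg_norm_sq_div_mul_sum_cosh_lt {c s : ℝ} (hs : 0 < s)
    (hcs : c ^ 2 * s < 2 * Fintype.card ι) :
    ∀ᶠ x in 𝓝 (0 : EuclideanSpace ℝ ι), x ≠ 0 →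
      exp (-‖x‖ ^ 2 / s) * ∑ i, cosh (c * x i) < Fintype.card ι := by
  have hcont : Continuous fun x : EuclideanSpace ℝ ι => c ^ 2 / 2 * exp (c ^ 2 / 2 * ‖x‖ ^ 2) :=
    by fun_prop
  have hlt : c ^ 2 / 2 * exp (c ^ 2 / 2 * ‖(0 : EuclideanSpace ℝ ι)‖ ^ 2) <
      Fintype.card ι / s := by
    rw [norm_zero, lt_div_iff₀ hs]
    norm_num
    linarith
  filter_upwards [(hcont.tendsto 0).eventually_lt_const hlt] with x hx hx0
  set S := ‖x‖ ^ 2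
  have hS : 0 < S := by positivity
  have hsum : ∑ i, cosh (c * x i) < Fintype.card ι * exp (S / s) :=
    calc ∑ i, cosh (c * x i) ≤ Fintype.card ι + S * (c ^ 2 / 2 * exp (c ^ 2 / 2 * S)) := by
          linarith [sum_cosh_mul_apply_le c x]
      _ < Fintype.card ι + S * (Fintype.card ι / s) := by gcongr
      _ = Fintype.card ι * (S / s + 1) := by ring
      _ ≤ Fintype.card ι * exp (S / s) := by gcongr; exact add_one_le_exp _
  calc exp (-S / s) * ∑ i, cosh (c * x i) < exp (-S / s) * (Fintype.card ι * exp (S / s)) := by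
        gcongr
    _ = Fintype.card ι := by
      rw [mul_left_comm, ← exp_add, neg_div, neg_add_cancel, exp_zero, mul_one]

end EuclideanSpace

theorem symmetric_gmm_strict_local_max_general (n : ℕ) (σ a ε : ℝ)
    (hσ : 0 < σ) (ha : 0 < a) (hε : 0 < ε) (hεlt : ε < Real.sqrt n * σ)
    (f : EuclideanSpace ℝ (Fin n) → ℝ)
    (hf : ∀ x, f x = a * ∑ i : Fin n,
      (Real.exp (-‖x - (Real.sqrt n * σ - ε) • EuclideanSpace.single i 1‖ ^ 2 /
          (2 * σ ^ 2)) +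
        Real.exp (-‖x + (Real.sqrt n * σ - ε) • EuclideanSpace.single i 1‖ ^ 2 /
          (2 * σ ^ 2)))) :
    (∃ U ∈ nhds (0 : EuclideanSpace ℝ (Fin n)),
      ∀ x ∈ U, x ≠ 0 → f x < f 0) ∧
    ∀ i : Fin n,
      dist (0 : EuclideanSpace ℝ (Fin n))
          ((Real.sqrt n * σ - ε) • EuclideanSpace.single i 1) = Real.sqrt n * σ - ε ∧
      dist (0 : EuclideanSpace ℝ (Fin n))
          (-((Real.sqrt n * σ - ε) • EuclideanSpace.single i 1)) = Real.sqrt n * σ - ε := by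
  set r := Real.sqrt n * σ - ε
  have hr : 0 < r := sub_pos.2 hεlt
  have hnorm (i : Fin n) : ‖r • EuclideanSpace.single i (1 : ℝ)‖ = r := by
    simp [norm_smul, hr.le]
  have hf' (x : EuclideanSpace ℝ (Fin n)) : f x = 2 * a * exp (-r ^ 2 / (2 * σ ^ 2)) *
      (exp (-‖x‖ ^ 2 / (2 * σ ^ 2)) * ∑ i, cosh (r / σ ^ 2 * x i)) := by
    simp only [hf, exp_neg_norm_sub_sq_div_add_exp_neg_norm_add_sq_div, hnorm, Finset.mul_sum,
      real_inner_smul_right, EuclideanSpace.inner_single_right, conj_trivial, one_mul]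
    refine Finset.sum_congr rfl fun i _ => ?_
    field_simp
  have hcs : (r / σ ^ 2) ^ 2 * (2 * σ ^ 2) < 2 * Fintype.card (Fin n) := by
    have hrσ : r ^ 2 < n * σ ^ 2 :=
      calc r ^ 2 < (Real.sqrt n * σ) ^ 2 := by gcongr; linarith
        _ = n * σ ^ 2 := by rw [mul_pow, sq_sqrt n.cast_nonneg]
    rw [show (r / σ ^ 2) ^ 2 * (2 * σ ^ 2) = 2 * (r ^ 2 / σ ^ 2) by field_simp,
      Fintype.card_fin]
    gcongr
    rwa [div_lt_iff₀ (by positivity)]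
  refine ⟨?_, fun i => ?_⟩
  · obtain ⟨U, hU, hlt⟩ := (EuclideanSpace.eventually_exp_neg_norm_sq_div_mul_sum_cosh_lt
      (by positivity) hcs).exists_mem
    refine ⟨U, hU, fun x hx hx0 => ?_⟩
    have hf0 : f 0 = 2 * a * exp (-r ^ 2 / (2 * σ ^ 2)) * n := by simp [hf']
    rw [hf' x, hf0]
    exact mul_lt_mul_of_pos_left (by simpa using hlt x hx hx0) (by positivity)
  · simp only [dist_zero_left, norm_neg, hnorm, and_self]

/-- For `n ≥ 1`, `σ > 0`, `a > 0` and `0 < ε < √n σ`, the spherical Gaussian mixture with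
`2n` components, common variance `σ²`, common amplitude `a` and means `±(√n σ - ε) eᵢ`
has a strict local maximum at the origin, and the distance from the origin to each of the
`2n` mean vectors equals `√n σ - ε`. -/
theorem symmetric_gmm_strict_local_max (n : ℕ) (hn : 1 ≤ n) (σ a ε : ℝ)
    (hσ : 0 < σ) (ha : 0 < a) (hε : 0 < ε) (hεlt : ε < Real.sqrt n * σ)
    (f : EuclideanSpace ℝ (Fin n) → ℝ)
    (hf : ∀ x, f x = a * ∑ i : Fin n,
      (Real.exp (-‖x - (Real.sqrt n * σ - ε) • EuclideanSpace.single i 1‖ ^ 2 /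
          (2 * σ ^ 2)) +
        Real.exp (-‖x + (Real.sqrt n * σ - ε) • EuclideanSpace.single i 1‖ ^ 2 /
          (2 * σ ^ 2)))) :
    (∃ U ∈ nhds (0 : EuclideanSpace ℝ (Fin n)),
      ∀ x ∈ U, x ≠ 0 → f x < f 0) ∧
    ∀ i : Fin n,
      dist (0 : EuclideanSpace ℝ (Fin n))
          ((Real.sqrt n * σ - ε) • EuclideanSpace.single i 1) = Real.sqrt n * σ - ε ∧
      dist (0 : EuclideanSpace ℝ (Fin n))
          (-((Real.sqrt n * σ - ε) • EuclideanSpace.single i 1)) = Real.sqrt n * σ - ε :=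
  symmetric_gmm_strict_local_max_general n σ a ε hσ ha hε hεlt f hf
end

section
/- The bound of the mode-location theorem cannot be improved by a global constant: for every n ≥ 1, every σ > 0, and every δ > 0, there exists a Gaussian mixture model f on ℝ^n (all of whose components are spherical with common variance σ^2, so that σ_{m,max} = σ_{m,min} = σ for every component m) and a local maximum x' of f such that |x' − x_m| > √n · σ_{m,max}^2 · σ_{m,min}^{−1} − δ = √n·σ − δ for every mean vector x_m of f. -/
/-!
Place the `2ⁿ` means at the vertices `(±σ, …, ±σ)` of a cube, all with weight one. The mixture
then factors as a product over coordinates of the one-dimensional mixtures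
`t ↦ g (t - σ) + g (t + σ)`, and each of these is maximal at `t = 0`: writing it as
`2 exp (-(t² + σ²) / 2σ²) cosh (t / σ)`, the bound `cosh u ≤ exp (u² / 2)` exactly cancels the
decay in `t`. So the centre of the cube is a mode, at distance `√n σ` from every mean.
-/

open Real

theorem exp_neg_sq_sub_add_exp_neg_sq_add_le {r σ : ℝ} (hr : r ^ 2 ≤ σ ^ 2) (t : ℝ) :
    exp (-(t - r) ^ 2 / (2 * σ ^ 2)) + exp (-(t + r) ^ 2 / (2 * σ ^ 2))
      ≤ 2 * exp (-r ^ 2 / (2 * σ ^ 2)) := by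
  set u := t * r / σ ^ 2
  set c := -(t ^ 2 + r ^ 2) / (2 * σ ^ 2)
  have h_cross : u ^ 2 / 2 ≤ t ^ 2 / (2 * σ ^ 2) := by
    have : u ^ 2 / 2 = t ^ 2 / (2 * σ ^ 2) * (r ^ 2 / σ ^ 2) := by ring
    rw [this]
    exact mul_le_of_le_one_right (by positivity) (div_le_one_of_le₀ hr (sq_nonneg σ))
  calc exp (-(t - r) ^ 2 / (2 * σ ^ 2)) + exp (-(t + r) ^ 2 / (2 * σ ^ 2))
      = exp (c + u) + exp (c + -u) := by congr 2 <;> simp only [c, u] <;> ring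
    _ = 2 * exp c * cosh u := by rw [cosh_eq, exp_add, exp_add]; ring
    _ ≤ 2 * exp c * exp (u ^ 2 / 2) := by gcongr; exact cosh_le_exp_half_sq u
    _ ≤ 2 * exp (-r ^ 2 / (2 * σ ^ 2)) := by
        rw [mul_assoc, ← exp_add]
        gcongr
        have : c = -r ^ 2 / (2 * σ ^ 2) - t ^ 2 / (2 * σ ^ 2) := by ring
        linarith

theorem sq_mul_inv_le_abs (x : ℝ) : x ^ 2 * x⁻¹ ≤ |x| := by
  rcases eq_or_ne x 0 with rfl | hx
  · simp
  · rw [sq, mul_inv_cancel_right₀ hx]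
    exact le_abs_self x

section Cube

variable {ι : Type*} [Fintype ι]

theorem exp_neg_norm_sq_div_eq_prod (x : EuclideanSpace ℝ ι) (c : ℝ) :
    exp (-‖x‖ ^ 2 / c) = ∏ i, exp (-x i ^ 2 / c) := by
  rw [EuclideanSpace.real_norm_sq_eq, ← exp_sum, ← Finset.sum_div, Finset.sum_neg_distrib]

def cubeVertex (r : ℝ) (ε : ι → Bool) : EuclideanSpace ℝ ι :=
  WithLp.toLp 2 fun i => cond (ε i) r (-r)

theorem norm_cubeVertex (r : ℝ) (ε : ι → Bool) :
    ‖cubeVertex r ε‖ = √(Fintype.card ι) * |r| := by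
  have h_coord (b : Bool) : cond b r (-r) ^ 2 = r ^ 2 := by cases b <;> simp
  have : ‖cubeVertex r ε‖ ^ 2 = Fintype.card ι * r ^ 2 := by
    simp [EuclideanSpace.real_norm_sq_eq, cubeVertex, h_coord]
  rw [← sqrt_sq (norm_nonneg _), this, sqrt_mul (Nat.cast_nonneg _), sqrt_sq_eq_abs]

variable [DecidableEq ι]

noncomputable def cubeMixture (σ r : ℝ) (x : EuclideanSpace ℝ ι) : ℝ :=
  ∑ ε : ι → Bool, exp (-‖x - cubeVertex r ε‖ ^ 2 / (2 * σ ^ 2))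

theorem cubeMixture_eq_prod (σ r : ℝ) (x : EuclideanSpace ℝ ι) :
    cubeMixture σ r x =
      ∏ i, (exp (-(x i - r) ^ 2 / (2 * σ ^ 2)) + exp (-(x i + r) ^ 2 / (2 * σ ^ 2))) := by
  have h_factor (i : ι) : exp (-(x i - r) ^ 2 / (2 * σ ^ 2)) + exp (-(x i + r) ^ 2 / (2 * σ ^ 2))
      = ∑ b : Bool, exp (-(x i - cond b r (-r)) ^ 2 / (2 * σ ^ 2)) := by
    simp [add_comm]
  simp_rw [h_factor, Fintype.prod_sum, cubeMixture, exp_neg_norm_sq_div_eq_prod]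
  rfl

theorem isMaxOn_cubeMixture {σ r : ℝ} (hr : r ^ 2 ≤ σ ^ 2) :
    IsMaxOn (cubeMixture (ι := ι) σ r) Set.univ 0 := by
  intro x _
  rw [Set.mem_ofPred_eq, cubeMixture_eq_prod, cubeMixture_eq_prod]
  refine Finset.prod_le_prod (fun i _ => by positivity) fun i _ => ?_
  simpa [two_mul] using exp_neg_sq_sub_add_exp_neg_sq_add_le hr (x i)

end Cube

theorem gmm_mode_distance_bound_sharp_general (n : ℕ) (σ δ : ℝ)
    (hδ : 0 < δ) :
    ∃ (M : ℕ) (_ : 0 < M) (a : Fin M → ℝ) (xm : Fin M → EuclideanSpace ℝ (Fin n))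
      (f : EuclideanSpace ℝ (Fin n) → ℝ) (x' : EuclideanSpace ℝ (Fin n)),
      (∀ m, 0 < a m) ∧
      (∀ x, f x = ∑ m, a m * Real.exp (-‖x - xm m‖ ^ 2 / (2 * σ ^ 2))) ∧
      IsLocalMax f x' ∧
      ∀ m : Fin M, Real.sqrt n * σ ^ 2 * σ⁻¹ - δ < dist x' (xm m) := by
  let e := Fintype.equivFin (Fin n → Bool)
  refine ⟨_, Fintype.card_pos, fun _ => 1, fun m => cubeVertex σ (e.symm m), cubeMixture σ σ, 0,
    fun _ => one_pos, fun x => ?_, (isMaxOn_cubeMixture le_rfl).isLocalMax Filter.univ_mem,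
    fun m => ?_⟩
  · simp only [cubeMixture, one_mul]
    exact (e.symm.sum_comp _).symm
  · rw [dist_zero_left, norm_cubeVertex, Fintype.card_fin, mul_assoc]
    have := mul_le_mul_of_nonneg_left (sq_mul_inv_le_abs σ) (sqrt_nonneg n)
    linarith

/-- **Proposition 3.6.** The bound of the mode-location theorem cannot be improved by a
global constant: for every `n ≥ 1`, `σ > 0` and `δ > 0` there is a (nonempty) Gaussian
mixture model `f` on `ℝⁿ`, all of whose components are spherical with common variance `σ²`
(so `σ_{m,max} = σ_{m,min} = σ`), together with a local maximum `x'` of `f` such that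
`|x' - xm m| > √n * σ² * σ⁻¹ - δ = √n σ - δ` for every mean vector `xm m` of `f`. -/
theorem gmm_mode_distance_bound_sharp (n : ℕ) (hn : 1 ≤ n) (σ δ : ℝ)
    (hσ : 0 < σ) (hδ : 0 < δ) :
    ∃ (M : ℕ) (_ : 0 < M) (a : Fin M → ℝ) (xm : Fin M → EuclideanSpace ℝ (Fin n))
      (f : EuclideanSpace ℝ (Fin n) → ℝ) (x' : EuclideanSpace ℝ (Fin n)),
      (∀ m, 0 < a m) ∧
      (∀ x, f x = ∑ m, a m * Real.exp (-‖x - xm m‖ ^ 2 / (2 * σ ^ 2))) ∧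
      IsLocalMax f x' ∧
      ∀ m : Fin M, Real.sqrt n * σ ^ 2 * σ⁻¹ - δ < dist x' (xm m) :=
  gmm_mode_distance_bound_sharp_general n σ δ hδ
end

section
/- Let u : ℝ^n → ℝ be a twice continuously differentiable, compactly supported, non-negative function such that u and all its partial derivatives up to order two are bounded. Then for every ε > 0 there exists a Gaussian mixture model g, i.e. a finite sum g(x) = Σ_{m=1}^{M} a_m · exp(−(1/2)(x − x_m)^T Σ_m^{−2}(x − x_m)) with non-negative weights a_m ≥ 0, mean vectors x_m ∈ ℝ^n and symmetric positive definite matrices Σ_m, such that the supremum norm satisfies sup_{x ∈ ℝ^n} |u(x) − g(x)| ≤ ε. -/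
/-!
Convolving `u` with the normalised Gaussian `k_b(y) ∝ exp (-b ‖y‖²)` approximates `u` uniformly
as `b → ∞`: `u` is bounded and uniformly continuous, and the mass of `k_b` outside any fixed ball
tends to `0`. For fixed `b`, split the compact support of `u` into finitely many measurable pieces
`Q i` of small diameter around points `p i`. Since `k_b` is Lipschitz, the convolution
`∫ u y * k_b (x - y)` is uniformly close to the Riemann sum
`∑ i, (∫ y in Q i, u y) * k_b (x - p i)`, a mixture of isotropic Gaussians with covariance
`(2b)⁻¹ I` and non-negative weights.
-/

open MeasureTheory Matrix Real Metric Set Filter Topology Module Function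
open scoped NNReal

section Discretization

variable {α : Type*} [MeasurableSpace α]

theorem abs_setIntegral_mul_sub_le {μ : Measure α} {s : Set α} (hs : MeasurableSet s)
    {f g : α → ℝ} (hf : IntegrableOn f s μ) (hfg : IntegrableOn (fun y => f y * g y) s μ)
    (hf0 : ∀ y ∈ s, 0 ≤ f y) {c η : ℝ} (hg : ∀ y ∈ s, |g y - c| ≤ η) :
    |∫ y in s, f y * g y ∂μ - (∫ y in s, f y ∂μ) * c| ≤ η * ∫ y in s, f y ∂μ := by
  rw [← integral_mul_const (μ := μ.restrict s) c f, ← integral_sub hfg (hf.mul_const c),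
    ← integral_const_mul (μ := μ.restrict s) η f, ← Real.norm_eq_abs]
  refine norm_integral_le_of_norm_le (hf.const_mul η) (ae_restrict_of_forall_mem hs fun y hy => ?_)
  rw [Real.norm_eq_abs, ← mul_sub, abs_mul, abs_of_nonneg (hf0 y hy), mul_comm η]
  exact mul_le_mul_of_nonneg_left (hg y hy) (hf0 y hy)

variable [MetricSpace α] [OpensMeasurableSpace α]

theorem IsCompact.exists_measurable_partition_subset_ball {K : Set α} (hK : IsCompact K)
    {δ : ℝ} (hδ : 0 < δ) :
    ∃ (M : ℕ) (Q : Fin M → Set α) (p : Fin M → α), (∀ i, MeasurableSet (Q i)) ∧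
      Pairwise (Disjoint on Q) ∧ ⋃ i, Q i = K ∧ ∀ i, Q i ⊆ ball (p i) δ := by
  obtain ⟨t, -, htfin, hcover⟩ := hK.finite_cover_balls hδ
  obtain ⟨M, p, -, rfl⟩ := htfin.fin_param
  set W : Fin M → Set α := fun i => K ∩ ball (p i) δ
  have hW : ∀ i, MeasurableSet (W i) := fun i => hK.measurableSet.inter measurableSet_ball
  refine ⟨M, disjointed W, p, fun i => disjointedRec (fun _ j ht => ht.diff (hW j)) (hW i),
    disjoint_disjointed W, ?_,
    fun i => (disjointed_subset W i).trans inter_subset_right⟩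
  rw [iUnion_disjointed, ← inter_iUnion, inter_eq_left]
  simpa only [biUnion_range] using hcover

theorem IsCompact.exists_sum_approx_setIntegral_mul_lipschitzWith (μ : Measure α) {K : Set α}
    (hK : IsCompact K) {f : α → ℝ} (hf : IntegrableOn f K μ) (hf0 : ∀ y ∈ K, 0 ≤ f y)
    (L : ℝ≥0) {η : ℝ} (hη : 0 < η) :
    ∃ (M : ℕ) (w : Fin M → ℝ) (p : Fin M → α), (∀ i, 0 ≤ w i) ∧
      ∀ g : α → ℝ, LipschitzWith L g → |∫ y in K, f y * g y ∂μ - ∑ i, w i * g (p i)| ≤ η := by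
  have hI : 0 ≤ ∫ y in K, f y ∂μ := setIntegral_nonneg hK.measurableSet hf0
  set δ := η / (L * ∫ y in K, f y ∂μ + 1)
  have hδ : 0 < δ := by positivity
  obtain ⟨M, Q, p, hQ, hdisj, hunion, hball⟩ := hK.exists_measurable_partition_subset_ball hδ
  have hQK : ∀ i, Q i ⊆ K := fun i => hunion ▸ subset_iUnion Q i
  have hfQ : ∀ i, IntegrableOn f (Q i) μ := fun i => hf.mono_set (hQK i)
  refine ⟨M, fun i => ∫ y in Q i, f y ∂μ, p,
    fun i => setIntegral_nonneg (hQ i) fun y hy => hf0 y (hQK i hy), fun g hg => ?_⟩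
  have hfg := hf.mul_continuousOn hg.continuous.continuousOn hK
  have hpiece : ∀ i, |∫ y in Q i, f y * g y ∂μ - (∫ y in Q i, f y ∂μ) * g (p i)|
      ≤ L * δ * ∫ y in Q i, f y ∂μ := fun i =>
    abs_setIntegral_mul_sub_le (hQ i) (hfQ i) (hfg.mono_set (hQK i))
      (fun y hy => hf0 y (hQK i hy)) fun y hy => by
        rw [← Real.dist_eq]
        exact (hg.dist_le_mul y (p i)).trans
          (mul_le_mul_of_nonneg_left (mem_ball.1 (hball i hy)).le L.2)
  have hsplit : ∀ h : α → ℝ, IntegrableOn h K μ →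
      ∫ y in K, h y ∂μ = ∑ i, ∫ y in Q i, h y ∂μ := fun h hh => by
    rw [← hunion, integral_iUnion_fintype hQ hdisj fun i => hh.mono_set (hQK i)]
  rw [hsplit _ hfg, ← Finset.sum_sub_distrib]
  calc _ ≤ ∑ i, |∫ y in Q i, f y * g y ∂μ - (∫ y in Q i, f y ∂μ) * g (p i)| :=
        Finset.abs_sum_le_sum_abs _ _
    _ ≤ ∑ i, L * δ * ∫ y in Q i, f y ∂μ := Finset.sum_le_sum fun i _ => hpiece i
    _ = L * δ * ∫ y in K, f y ∂μ := by rw [← Finset.mul_sum, hsplit f hf]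
    _ = η * ((L * ∫ y in K, f y ∂μ) / (L * ∫ y in K, f y ∂μ + 1)) := by ring
    _ ≤ η := mul_le_of_le_one_right hη.le <| (div_le_one (by positivity)).2 (by linarith)

end Discretization

theorem abs_sub_integral_mul_le {β : Type*} [MeasurableSpace β] {μ : Measure β} {k v : β → ℝ}
    (hk0 : ∀ y, 0 ≤ k y) (hk : Integrable k μ) (hk1 : ∫ y, k y ∂μ = 1)
    (hvk : Integrable (fun y => v y * k y) μ) {s : Set β} (hs : MeasurableSet s) {a δ D : ℝ}
    (hδ0 : 0 ≤ δ) (hδ : ∀ y ∈ s, |a - v y| ≤ δ) (hD : ∀ y, |a - v y| ≤ D) :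
    |a - ∫ y, v y * k y ∂μ| ≤ δ + D * ∫ y in sᶜ, k y ∂μ := by
  have hdiff : Integrable (fun y => (a - v y) * k y) μ :=
    ((hk.const_mul a).sub hvk).congr (.of_forall fun y => by simp only [Pi.sub_apply]; ring)
  have hrepr : a - ∫ y, v y * k y ∂μ = ∫ y, (a - v y) * k y ∂μ := by
    simp only [sub_mul]
    rw [integral_sub (hk.const_mul a) hvk, integral_const_mul, hk1, mul_one]
  have hbound : ∀ t : Set β, MeasurableSet t → ∀ c, (∀ y ∈ t, |a - v y| ≤ c) →
      ∫ y in t, |(a - v y) * k y| ∂μ ≤ c * ∫ y in t, k y ∂μ := fun t ht c hc => by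
    rw [← integral_const_mul]
    refine setIntegral_mono_on hdiff.abs.integrableOn (hk.const_mul c).integrableOn ht
      fun y hy => ?_
    rw [abs_mul, abs_of_nonneg (hk0 y)]
    exact mul_le_mul_of_nonneg_right (hc y hy) (hk0 y)
  have hks : ∫ y in s, k y ∂μ ≤ 1 := hk1 ▸ setIntegral_le_integral hk (.of_forall hk0)
  calc |a - ∫ y, v y * k y ∂μ| ≤ ∫ y, |(a - v y) * k y| ∂μ := by
        rw [hrepr]; exact abs_integral_le_integral_abs
    _ = ∫ y in s, |(a - v y) * k y| ∂μ + ∫ y in sᶜ, |(a - v y) * k y| ∂μ :=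
        (integral_add_compl hs hdiff.abs).symm
    _ ≤ δ * ∫ y in s, k y ∂μ + D * ∫ y in sᶜ, k y ∂μ :=
        add_le_add (hbound s hs δ hδ) (hbound sᶜ hs.compl D fun y _ => hD y)
    _ ≤ δ + D * ∫ y in sᶜ, k y ∂μ := by gcongr; exact mul_le_of_le_one_right hδ0 hks

theorem lipschitzWith_exp_neg_mul_sq {b : ℝ} (hb : 0 ≤ b) :
    LipschitzWith (√b).toNNReal (fun t : ℝ => exp (-b * t ^ 2)) := by
  have hderiv : ∀ t : ℝ, HasDerivAt (fun t : ℝ => exp (-b * t ^ 2))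
      (exp (-b * t ^ 2) * (-b * (2 * t))) t := fun t => by
    simpa using ((hasDerivAt_pow 2 t).const_mul (-b)).exp
  refine lipschitzWith_of_nnnorm_deriv_le (fun t => (hderiv t).differentiableAt) fun t => ?_
  rw [← NNReal.coe_le_coe, coe_nnnorm, (hderiv t).deriv, Real.coe_toNNReal _ (sqrt_nonneg b)]
  -- with `s = √b |t|`, the derivative is `√b * 2 s e^{-s²}` and `2 s ≤ 1 + s² ≤ e^{s²}`
  set s := √b * |t|
  have hs : b * t ^ 2 = s ^ 2 := by rw [mul_pow, sq_sqrt hb, sq_abs]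
  have hes : 2 * s ≤ exp (s ^ 2) := by nlinarith [add_one_le_exp (s ^ 2), sq_nonneg (s - 1)]
  have hslope : |-b * (2 * t)| = √b * (2 * s) := by
    rw [abs_mul, abs_mul, abs_neg, abs_of_nonneg hb, abs_two]
    linear_combination (-2 * |t|) * mul_self_sqrt hb
  calc ‖exp (-b * t ^ 2) * (-b * (2 * t))‖ = √b * (2 * s) * exp (-(s ^ 2)) := by
        rw [Real.norm_eq_abs, abs_mul, abs_of_pos (exp_pos _), neg_mul, hs, hslope, mul_comm]
    _ ≤ √b * exp (s ^ 2) * exp (-(s ^ 2)) := by gcongr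
    _ = √b := by rw [mul_assoc, ← exp_add, add_neg_cancel, exp_zero, mul_one]

section GaussianKernel

variable {V : Type*} [NormedAddCommGroup V] [InnerProductSpace ℝ V]

noncomputable def gaussianKernel (b : ℝ) (y : V) : ℝ :=
  exp (-b * ‖y‖ ^ 2) / (π / b) ^ (finrank ℝ V / 2 : ℝ)

theorem gaussianKernel_nonneg {b : ℝ} (hb : 0 < b) (y : V) : 0 ≤ gaussianKernel b y := by
  unfold gaussianKernel; positivity

theorem lipschitzWith_gaussianKernel {b : ℝ} (hb : 0 < b) :
    LipschitzWith (√b / (π / b) ^ (finrank ℝ V / 2 : ℝ)).toNNReal (gaussianKernel (V := V) b) := by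
  refine LipschitzWith.of_dist_le_mul fun y z => ?_
  have hc : 0 < (π / b) ^ (finrank ℝ V / 2 : ℝ) := by positivity
  have h := ((lipschitzWith_exp_neg_mul_sq hb.le).comp lipschitzWith_one_norm).dist_le_mul y z
  rw [mul_one, Real.coe_toNNReal _ (sqrt_nonneg b)] at h
  rw [Real.coe_toNNReal _ (by positivity), div_mul_eq_mul_div]
  simp only [gaussianKernel, Real.dist_eq, ← sub_div, abs_div, abs_of_pos hc,
    Function.comp_apply] at h ⊢
  exact div_le_div_of_nonneg_right h hc.le

theorem gaussianKernel_le_of_le_norm {b r : ℝ} (hb : 0 < b) (hr : 0 ≤ r) {y : V} (hy : r ≤ ‖y‖) :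
    gaussianKernel b y ≤ 2 ^ (finrank ℝ V / 2 : ℝ) * exp (-(b / 2) * r ^ 2) *
      gaussianKernel (b / 2) y := by
  have hsplit : exp (-b * ‖y‖ ^ 2) = exp (-(b / 2) * ‖y‖ ^ 2) * exp (-(b / 2) * ‖y‖ ^ 2) := by
    rw [← exp_add]; ring_nf
  have hnorm : (π / (b / 2)) ^ (finrank ℝ V / 2 : ℝ)
      = 2 ^ (finrank ℝ V / 2 : ℝ) * (π / b) ^ (finrank ℝ V / 2 : ℝ) := by
    rw [← mul_rpow (by norm_num) (by positivity)]; congr 1; field_simp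
  have hdecay : exp (-(b / 2) * ‖y‖ ^ 2) ≤ exp (-(b / 2) * r ^ 2) :=
    exp_le_exp.2 (by nlinarith [pow_le_pow_left₀ hr hy 2])
  unfold gaussianKernel
  rw [hsplit, hnorm]
  have hT : (0 : ℝ) < 2 ^ (finrank ℝ V / 2 : ℝ) := by positivity
  rw [mul_comm (2 ^ _) _, mul_assoc, mul_div_assoc', mul_div_mul_left _ _ hT.ne', mul_div_assoc]
  gcongr

variable [FiniteDimensional ℝ V] [MeasurableSpace V] [BorelSpace V]

theorem integral_gaussianKernel {b : ℝ} (hb : 0 < b) : ∫ y : V, gaussianKernel b y = 1 := by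
  simp_rw [gaussianKernel]
  rw [integral_div, GaussianFourier.integral_rexp_neg_mul_sq_norm hb,
    div_self (by positivity)]

theorem integrable_gaussianKernel {b : ℝ} (hb : 0 < b) :
    Integrable (gaussianKernel (V := V) b) := by
  by_contra h
  simpa [integral_undef h] using integral_gaussianKernel (V := V) hb

theorem setIntegral_compl_ball_gaussianKernel_le {b r : ℝ} (hb : 0 < b) (hr : 0 ≤ r) :
    ∫ y in (ball (0 : V) r)ᶜ, gaussianKernel b y ≤
      2 ^ (finrank ℝ V / 2 : ℝ) * exp (-(b / 2) * r ^ 2) := by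
  have hb2 : 0 < b / 2 := half_pos hb
  calc ∫ y in (ball (0 : V) r)ᶜ, gaussianKernel b y
      ≤ ∫ y in (ball (0 : V) r)ᶜ, 2 ^ (finrank ℝ V / 2 : ℝ) * exp (-(b / 2) * r ^ 2) *
          gaussianKernel (b / 2) y :=
        setIntegral_mono_on (integrable_gaussianKernel hb).integrableOn
          ((integrable_gaussianKernel hb2).const_mul _).integrableOn measurableSet_ball.compl
          fun y hy => gaussianKernel_le_of_le_norm hb hr (by simpa using hy)
    _ ≤ 2 ^ (finrank ℝ V / 2 : ℝ) * exp (-(b / 2) * r ^ 2) *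
          ∫ y : V, gaussianKernel (b / 2) y := by
        rw [integral_const_mul (μ := volume.restrict (ball (0 : V) r)ᶜ)]
        exact mul_le_mul_of_nonneg_left (setIntegral_le_integral
          (integrable_gaussianKernel hb2) (.of_forall (gaussianKernel_nonneg hb2))) (by positivity)
    _ = 2 ^ (finrank ℝ V / 2 : ℝ) * exp (-(b / 2) * r ^ 2) := by
        rw [integral_gaussianKernel (V := V) hb2, mul_one]

theorem tendsto_setIntegral_compl_ball_gaussianKernel {r : ℝ} (hr : 0 < r) :
    Tendsto (fun b => ∫ y in (ball (0 : V) r)ᶜ, gaussianKernel b y) atTop (𝓝 0) := by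
  have hdecay :
      Tendsto (fun b => 2 ^ (finrank ℝ V / 2 : ℝ) * exp (-(b / 2) * r ^ 2)) atTop (𝓝 0) := by
    have hlin : Tendsto (fun b : ℝ => -(b / 2) * r ^ 2) atTop atBot := by
      have hr2 : -(r ^ 2 / 2) < 0 := neg_neg_of_pos (by positivity)
      convert tendsto_id.atTop_mul_const_of_neg hr2 using 2 with b
      simp only [id]; ring
    simpa using (tendsto_exp_atBot.comp hlin).const_mul (2 ^ (finrank ℝ V / 2 : ℝ))
  refine tendsto_of_tendsto_of_tendsto_of_le_of_le' tendsto_const_nhds hdecay ?_ ?_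
  · filter_upwards [eventually_gt_atTop 0] with b hb
    exact setIntegral_nonneg measurableSet_ball.compl fun y _ => gaussianKernel_nonneg hb y
  · filter_upwards [eventually_gt_atTop 0] with b hb
    exact setIntegral_compl_ball_gaussianKernel_le hb hr.le

theorem HasCompactSupport.eventually_abs_sub_integral_mul_gaussianKernel_le {u : V → ℝ}
    (hsupp : HasCompactSupport u) (hu : Continuous u) {ε : ℝ} (hε : 0 < ε) :
    ∀ᶠ b in atTop, ∀ x, |u x - ∫ y, u y * gaussianKernel b (x - y)| ≤ ε := by
  obtain ⟨r, hr, hclose⟩ := Metric.uniformContinuous_iff.1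
    (hsupp.uniformContinuous_of_continuous hu) (ε / 2) (half_pos hε)
  obtain ⟨C, hC⟩ := hu.bounded_above_of_compact_support hsupp
  have htail := (tendsto_setIntegral_compl_ball_gaussianKernel (V := V) hr).const_mul (2 * C)
  rw [mul_zero] at htail
  filter_upwards [htail.eventually (gt_mem_nhds (half_pos hε)), eventually_gt_atTop 0]
    with b hsmall hb x
  rw [← integral_sub_left_eq_self _ volume x]
  simp only [sub_sub_cancel]
  have hvk : Integrable (fun y => u (x - y) * gaussianKernel b y) :=
    (integrable_gaussianKernel hb).bdd_mul (hu.comp (continuous_sub_left x)).aestronglyMeasurable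
      (.of_forall fun y => hC (x - y))
  have hnear : ∀ y ∈ ball (0 : V) r, |u x - u (x - y)| ≤ ε / 2 := fun y hy => by
    rw [← Real.dist_eq]
    refine (hclose ?_).le
    simpa [dist_eq_norm] using hy
  have hfar : ∀ y, |u x - u (x - y)| ≤ 2 * C := fun y =>
    (abs_sub _ _).trans (two_mul C ▸ add_le_add (hC x) (hC (x - y)))
  have := abs_sub_integral_mul_le (gaussianKernel_nonneg hb) (integrable_gaussianKernel hb)
    (integral_gaussianKernel hb) hvk measurableSet_ball (half_pos hε).le hnear hfar
  linarith

theorem HasCompactSupport.exists_sum_gaussianKernel_approx {u : V → ℝ}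
    (hsupp : HasCompactSupport u) (hu : Continuous u) (hpos : ∀ x, 0 ≤ u x) {ε : ℝ}
    (hε : 0 < ε) :
    ∃ (b : ℝ) (M : ℕ) (w : Fin M → ℝ) (p : Fin M → V), 0 < b ∧ (∀ i, 0 ≤ w i) ∧
      ∀ x, |u x - ∑ i, w i * gaussianKernel b (x - p i)| ≤ ε := by
  obtain ⟨b, hconv, hb⟩ := ((hsupp.eventually_abs_sub_integral_mul_gaussianKernel_le hu
    (half_pos hε)).and (eventually_gt_atTop 0)).exists
  obtain ⟨M, w, p, hw, hsum⟩ := hsupp.isCompact.exists_sum_approx_setIntegral_mul_lipschitzWith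
    volume (hu.continuousOn.integrableOn_compact hsupp.isCompact) (fun y _ => hpos y)
    (√b / (π / b) ^ (finrank ℝ V / 2 : ℝ)).toNNReal (half_pos hε)
  refine ⟨b, M, w, p, hb, hw, fun x => ?_⟩
  have hshift := hsum (fun y => gaussianKernel b (x - y)) <| .of_dist_le_mul fun y z => by
    simpa only [dist_sub_left] using (lipschitzWith_gaussianKernel hb).dist_le_mul (x - y) (x - z)
  rw [setIntegral_eq_integral_of_forall_compl_eq_zero fun y hy => by
    rw [image_eq_zero_of_notMem_tsupport hy, zero_mul]] at hshift
  calc |u x - ∑ i, w i * gaussianKernel b (x - p i)|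
      ≤ |u x - ∫ y, u y * gaussianKernel b (x - y)|
        + |(∫ y, u y * gaussianKernel b (x - y)) - ∑ i, w i * gaussianKernel b (x - p i)| :=
        abs_sub_le _ _ _
    _ ≤ ε := by linarith [hconv x]

end GaussianKernel

theorem dotProduct_inv_sq_smul_one_mulVec {ι : Type*} [Fintype ι] [DecidableEq ι] {σ : ℝ}
    (hσ : σ ≠ 0) (v : ι → ℝ) :
    v ⬝ᵥ (((σ • 1 : Matrix ι ι ℝ) ^ 2)⁻¹ *ᵥ v) = (v ⬝ᵥ v) / σ ^ 2 := by
  have hinv : ((σ • 1 : Matrix ι ι ℝ) ^ 2)⁻¹ = (σ ^ 2)⁻¹ • 1 := by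
    rw [smul_pow, one_pow]
    refine inv_eq_left_inv ?_
    rw [smul_mul_smul_comm, one_mul, inv_mul_cancel₀ (pow_ne_zero 2 hσ), one_smul]
  rw [hinv, smul_mulVec, one_mulVec, dotProduct_smul, smul_eq_mul, div_eq_inv_mul]

theorem gmm_uniform_approximation_general (n : ℕ) (u : EuclideanSpace ℝ (Fin n) → ℝ)
    (hu : ContDiff ℝ 2 u) (hsupp : HasCompactSupport u) (hpos : ∀ x, 0 ≤ u x)
    (ε : ℝ) (hε : 0 < ε) :
    ∃ (M : ℕ) (a : Fin M → ℝ) (xm : Fin M → EuclideanSpace ℝ (Fin n))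
      (S : Fin M → Matrix (Fin n) (Fin n) ℝ),
      (∀ m, 0 ≤ a m) ∧ (∀ m, (S m).PosDef) ∧
      ∀ x, |u x - ∑ m, a m *
        Real.exp (-(1/2) * ((fun i => x i - xm m i) ⬝ᵥ
          ((S m ^ 2)⁻¹).mulVec fun i => x i - xm m i))| ≤ ε := by
  obtain ⟨b, M, w, p, hb, hw, happrox⟩ :=
    hsupp.exists_sum_gaussianKernel_approx hu.continuous hpos hε
  have hσ : 0 < (√(2 * b))⁻¹ := by positivity
  have hquad : ∀ v : EuclideanSpace ℝ (Fin n),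
      -(1 / 2) * (⇑v ⬝ᵥ (((√(2 * b))⁻¹ • 1 : Matrix (Fin n) (Fin n) ℝ) ^ 2)⁻¹ *ᵥ ⇑v)
        = -b * ‖v‖ ^ 2 := fun v => by
    rw [dotProduct_inv_sq_smul_one_mulVec hσ.ne', ← real_inner_self_eq_norm_sq,
      EuclideanSpace.inner_eq_star_dotProduct, star_trivial, inv_pow, sq_sqrt (by positivity)]
    field_simp
  refine ⟨M, fun i => w i / (π / b) ^ (n / 2 : ℝ), p, fun _ => (√(2 * b))⁻¹ • 1,
    fun i => div_nonneg (hw i) (by positivity), fun _ => PosDef.one.smul hσ, fun x => ?_⟩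
  convert happrox x using 4 with i
  rw [gaussianKernel, finrank_euclideanSpace_fin, ← hquad, div_mul_eq_mul_div, mul_div_assoc]
  rfl

/-- **Proposition 3.7.** Let `u : ℝⁿ → ℝ` be twice continuously differentiable, compactly
supported and non-negative, with `u` and all its partial derivatives up to order two
bounded. Then for every `ε > 0` there is a Gaussian mixture model
`g(x) = ∑ m, a m * exp(-(1/2) (x - xm m)ᵀ (Σ m)⁻² (x - xm m))` with non-negative weights
and symmetric positive definite matrices `Σ m` such that `sup_x |u x - g x| ≤ ε`. -/
theorem gmm_uniform_approximation (n : ℕ) (u : EuclideanSpace ℝ (Fin n) → ℝ)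
    (hu : ContDiff ℝ 2 u) (hsupp : HasCompactSupport u) (hpos : ∀ x, 0 ≤ u x)
    (hbdd : ∀ k : ℕ, k ≤ 2 → ∃ C : ℝ, ∀ x, ‖iteratedFDeriv ℝ k u x‖ ≤ C)
    (ε : ℝ) (hε : 0 < ε) :
    ∃ (M : ℕ) (a : Fin M → ℝ) (xm : Fin M → EuclideanSpace ℝ (Fin n))
      (S : Fin M → Matrix (Fin n) (Fin n) ℝ),
      (∀ m, 0 ≤ a m) ∧ (∀ m, (S m).PosDef) ∧
      ∀ x, |u x - ∑ m, a m *
        Real.exp (-(1/2) * ((fun i => x i - xm m i) ⬝ᵥ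
          ((S m ^ 2)⁻¹).mulVec fun i => x i - xm m i))| ≤ ε :=
  gmm_uniform_approximation_general n u hu hsupp hpos ε hε
end

section
/- Let f(x) = Σ_{m=1}^{M} a_m · exp(−|x − x_m|^2/(2σ^2)) be a mixture of spherical Gaussians on ℝ^n with common variance σ^2 > 0 and weights a_m > 0. If x' is a local maximum of f, then the Euclidean distance from x' to the finite set of mean vectors {x_1, …, x_M} is at most √n·σ, i.e. min_{1 ≤ m ≤ M} |x' − x_m| ≤ √n·σ. -/
/-!
At a local maximum every second directional derivative is nonpositive, so summing over an
orthonormal basis the Laplacian of `f` at `x'` is nonpositive. The Laplacian of the Gaussian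
centred at `xₘ` is a positive multiple of `|x - xₘ|² - nσ²`; if every mean were farther than
`√n σ` from `x'`, the Laplacian of `f` at `x'` would be positive.
-/

open Filter Topology Real RealInnerProductSpace

/-- If `L > 0`, the first-derivative test makes `x` a local minimum as well, so `φ` is locally
constant and `L = 0`. -/
theorem IsLocalMax.hasDerivAt_deriv_nonpos {φ φ' : ℝ → ℝ} {x L : ℝ} (hmax : IsLocalMax φ x)
    (hφ : ∀ᶠ t in 𝓝 x, HasDerivAt φ (φ' t) t) (hφ' : HasDerivAt φ' L x) : L ≤ 0 := by
  by_contra! hL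
  have hcrit : φ' x = 0 := hmax.hasDerivAt_eq_zero hφ.self_of_nhds
  have hsign := eventually_nhdsWithin_sign_eq_of_deriv_pos (hφ'.deriv ▸ hL) hcrit
  have hmin : IsLocalMin φ x := isLocalMin_of_sign_deriv hφ.self_of_nhds.continuousAt <| by
    filter_upwards [nhdsWithin_le_nhds hsign, nhdsWithin_le_nhds hφ] with t hs hd
    rw [hd.deriv, hs]
  have hconst : φ =ᶠ[𝓝 x] fun _ => φ x := by
    filter_upwards [hmin, hmax] with t h₁ h₂ using le_antisymm h₂ h₁
  have hφ'_zero : φ' =ᶠ[𝓝 x] fun _ => 0 := by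
    filter_upwards [hconst.eventuallyEq_nhds, hφ] with t ht hd
    exact hd.unique ((hasDerivAt_const t (φ x)).congr_of_eventuallyEq ht)
  exact hL.ne' (hφ'.unique ((hasDerivAt_const x 0).congr_of_eventuallyEq hφ'_zero))

section Gaussian

variable {F : Type*} [NormedAddCommGroup F] [InnerProductSpace ℝ F]

theorem hasDerivAt_gaussian_line (σ : ℝ) (v e : F) (t : ℝ) :
    HasDerivAt (fun t : ℝ => exp (-‖v + t • e‖ ^ 2 / (2 * σ ^ 2)))
      (exp (-‖v + t • e‖ ^ 2 / (2 * σ ^ 2)) * (-⟪v + t • e, e⟫ / σ ^ 2)) t := by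
  have hline : HasDerivAt (fun t : ℝ => v + t • e) e t := by
    simpa using ((hasDerivAt_id t).smul_const e).const_add v
  convert (hline.norm_sq.fun_neg.div_const (2 * σ ^ 2)).exp using 1
  ring

theorem hasDerivAt_deriv_gaussian_line (σ : ℝ) (v e : F) :
    HasDerivAt (fun t : ℝ => exp (-‖v + t • e‖ ^ 2 / (2 * σ ^ 2)) * (-⟪v + t • e, e⟫ / σ ^ 2))
      (exp (-‖v‖ ^ 2 / (2 * σ ^ 2)) * (⟪v, e⟫ ^ 2 / σ ^ 4 - ‖e‖ ^ 2 / σ ^ 2)) 0 := by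
  have hline : HasDerivAt (fun t : ℝ => v + t • e) e 0 := by
    simpa using ((hasDerivAt_id (0 : ℝ)).smul_const e).const_add v
  have hinner : HasDerivAt (fun t : ℝ => -⟪v + t • e, e⟫ / σ ^ 2) (-‖e‖ ^ 2 / σ ^ 2) 0 := by
    simpa [real_inner_self_eq_norm_sq] using
      (hline.inner ℝ (hasDerivAt_const 0 e)).fun_neg.div_const (σ ^ 2)
  refine ((hasDerivAt_gaussian_line σ v e 0).fun_mul hinner).congr_deriv ?_
  simp only [zero_smul, add_zero]
  ring

variable {ι : Type*} [Fintype ι]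

noncomputable def gaussianMixture (σ : ℝ) (a : ι → ℝ) (μ : ι → F) (x : F) : ℝ :=
  ∑ m, a m * exp (-‖x - μ m‖ ^ 2 / (2 * σ ^ 2))

theorem IsLocalMax.gaussianMixture_second_deriv_nonpos {σ : ℝ} {a : ι → ℝ} {μ : ι → F} {x : F}
    (h : IsLocalMax (gaussianMixture σ a μ) x) (e : F) :
    ∑ m, a m * exp (-‖x - μ m‖ ^ 2 / (2 * σ ^ 2)) * (⟪x - μ m, e⟫ ^ 2 / σ ^ 4 - ‖e‖ ^ 2 / σ ^ 2)
      ≤ 0 := by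
  have hline : IsLocalMax (fun t : ℝ => gaussianMixture σ a μ (x + t • e)) 0 :=
    (show IsLocalMax (gaussianMixture σ a μ) (x + (0 : ℝ) • e) by rwa [zero_smul, add_zero]
      ).comp_continuous (g := fun t : ℝ => x + t • e) (by fun_prop)
  simp only [gaussianMixture, add_sub_right_comm x _ (μ _)] at hline
  refine hline.hasDerivAt_deriv_nonpos (Eventually.of_forall fun t =>
    HasDerivAt.fun_sum fun m _ => (hasDerivAt_gaussian_line σ _ e t).const_mul (a m)) ?_
  simpa only [mul_assoc] using
    HasDerivAt.fun_sum fun m _ => (hasDerivAt_deriv_gaussian_line σ (x - μ m) e).const_mul (a m)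

theorem IsLocalMax.gaussianMixture_laplacian_nonpos [FiniteDimensional ℝ F] {σ : ℝ}
    {a : ι → ℝ} {μ : ι → F} {x : F} (h : IsLocalMax (gaussianMixture σ a μ) x) :
    ∑ m, a m * exp (-‖x - μ m‖ ^ 2 / (2 * σ ^ 2))
      * (‖x - μ m‖ ^ 2 / σ ^ 4 - Module.finrank ℝ F / σ ^ 2) ≤ 0 := by
  let b := stdOrthonormalBasis ℝ F
  have hsum := Finset.sum_nonpos fun i (_ : i ∈ Finset.univ) =>
    h.gaussianMixture_second_deriv_nonpos (b i)
  rw [Finset.sum_comm] at hsum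
  refine le_of_eq_of_le (Finset.sum_congr rfl fun m _ => ?_) hsum
  rw [← Finset.mul_sum, Finset.sum_sub_distrib, ← Finset.sum_div, b.sum_sq_inner_left]
  simp [b.orthonormal.1, div_eq_mul_inv]

end Gaussian

/-- For a mixture of spherical Gaussians `f(x) = ∑ m, a m * exp(-|x - xm m|²/(2σ²))` on
`ℝⁿ` with common variance `σ² > 0` and positive weights, any local maximum `x'` of `f`
lies within distance `√n σ` of the set of mean vectors:
`min_{1 ≤ m ≤ M} |x' - xm m| ≤ √n σ`. -/
theorem spherical_gmm_mode_min_distance (n M : ℕ) (hM : 0 < M) (σ : ℝ) (hσ : 0 < σ)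
    (a : Fin M → ℝ) (ha : ∀ m, 0 < a m)
    (xm : Fin M → EuclideanSpace ℝ (Fin n))
    (f : EuclideanSpace ℝ (Fin n) → ℝ)
    (hf : ∀ x, f x = ∑ m, a m * Real.exp (-‖x - xm m‖ ^ 2 / (2 * σ ^ 2)))
    (x' : EuclideanSpace ℝ (Fin n)) (hx' : IsLocalMax f x') :
    Finset.univ.inf'
        (by simpa [Finset.univ_nonempty_iff] using Fin.pos_iff_nonempty.mp hM)
        (fun m => dist x' (xm m))
      ≤ Real.sqrt n * σ := by
  by_contra! hfar
  obtain rfl : f = gaussianMixture σ a xm := funext hf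
  have hlap := hx'.gaussianMixture_laplacian_nonpos
  rw [finrank_euclideanSpace_fin] at hlap
  refine hlap.not_gt (Finset.sum_pos (fun m _ => ?_) ⟨⟨0, hM⟩, Finset.mem_univ _⟩)
  have hm : √n * σ < ‖x' - xm m‖ := by
    simpa [dist_eq_norm] using (Finset.lt_inf'_iff _).1 hfar m (Finset.mem_univ m)
  have hsq : n * σ ^ 2 < ‖x' - xm m‖ ^ 2 := by
    simpa [mul_pow] using pow_lt_pow_left₀ hm (by positivity) two_ne_zero
  have hterm : (n : ℝ) / σ ^ 2 < ‖x' - xm m‖ ^ 2 / σ ^ 4 := by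
    rw [div_lt_div_iff₀ (by positivity) (by positivity)]
    nlinarith [pow_pos hσ 2]
  exact mul_pos (mul_pos (ha m) (exp_pos _)) (sub_pos.2 hterm)
end
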